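/- In the ring ℚ(t)[v_1^±, v_2^±, …] of polynomials in two families of variables, the double Hall-Littlewood elements V_{λ,μ}, defined by applying the operator 𝕃·ℝ^+·ℝ^- to v^+_λ v^-_μ, satisfy V_{λ,μ} ∈ v_{λ,μ} + ∑ ℚ(t)·v_{λ̃,μ̃} where the sum runs over bipartitions (λ̃, μ̃) strictly dominating (λ, μ); consequently {V_{λ,μ}} over all bipartitions is a ℚ(t)-basis of ℚ(t)[v_1^±, v_2^±, …]. -/

import Mathlib

/- STATEMENT 12: In 𝒟Λ_t = ℚ(t)[v₁⁺,v₂⁺,…,v₁⁻,v₂⁻,…], the double Hall-Littlewood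
elements V_{λ,μ} = 𝕃·ℝ⁺·ℝ⁻ (v⁺_λ v⁻_μ) (fully expanded, with the finite product
of operators at the lengths of λ and μ) satisfy
  V_{λ,μ} ∈ v_{λ,μ} + ∑_{(λ̃,μ̃) ⊳ (λ,μ)} ℚ(t) v_{λ̃,μ̃},
sum over bipartitions strictly dominating (λ,μ) in the extended dominance order
(λ̃ ⊵ λ iff |λ̃| < |λ|, or |λ̃| = |λ| and λ̃ dominates λ); consequently
{V_{λ,μ}} over all bipartitions is a ℚ(t)-basis of 𝒟Λ_t. -/

noncomputable section

attribute [local instance] Classical.propDecidable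

local notation "K" => RatFunc ℚ

noncomputable def tv : K := RatFunc.X

abbrev RV : Type := MvPolynomial (Bool × ℕ) K

noncomputable def vz (s : Bool) (a : ℤ) : RV :=
  if a < 0 then 0 else if a = 0 then 1 else MvPolynomial.X (s, a.toNat - 1)

noncomputable def cL (p : ℕ) : K := if p = 0 then 1 else (1 - tv⁻¹) * tv ^ p

/-- V_{α,β}, fully expanded. -/
noncomputable def Vv (ℓ m : ℕ) (a : Fin ℓ → ℤ) (b : Fin m → ℤ) : RV :=
  ∑ᶠ S : Fin ℓ × Fin m → ℕ, ∑ᶠ P : Fin ℓ × Fin ℓ → ℕ, ∑ᶠ P' : Fin m × Fin m → ℕ,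
    if (∀ ij : Fin ℓ × Fin ℓ, ¬ ij.1 < ij.2 → P ij = 0) ∧
        (∀ ij : Fin m × Fin m, ¬ ij.1 < ij.2 → P' ij = 0) then
      ((∏ ij : Fin ℓ × Fin m, cL (S ij)) * (∏ ij : Fin ℓ × Fin ℓ, cL (P ij)) *
          ∏ ij : Fin m × Fin m, cL (P' ij)) •
        ((∏ i, vz true (a i - (∑ j, (S (i, j) : ℤ))
              + (∑ k, (P (i, k) : ℤ)) - ∑ k, (P (k, i) : ℤ))) *
         ∏ j, vz false (b j - (∑ i, (S (i, j) : ℤ))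
              + (∑ k, (P' (j, k) : ℤ)) - ∑ k, (P' (k, j) : ℤ)))
    else 0

def IsPart (f : ℕ → ℕ) : Prop := Antitone f ∧ ∃ N, ∀ n, N ≤ n → f n = 0

noncomputable def plen (f : ℕ → ℕ) : ℕ := sInf {N | ∀ n, N ≤ n → f n = 0}

/-- V_{λ,μ} for a bipartition. -/
noncomputable def Vpart (f g : ℕ → ℕ) : RV :=
  Vv (plen f) (plen g) (fun k => (f (k : ℕ) : ℤ)) (fun k => (g (k : ℕ) : ℤ))

/-- the monomial v_{λ,μ} = v⁺_λ v⁻_μ. -/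
noncomputable def vmono (f g : ℕ → ℕ) : RV :=
  (∏ᶠ i : ℕ, vz true (f i)) * ∏ᶠ i : ℕ, vz false (g i)

/-- extended dominance order on partitions: g ⊵ f iff |g| < |f|, or |g| = |f| and
g dominates f. -/
def PDom (g f : ℕ → ℕ) : Prop :=
  (∑ᶠ i, g i) < (∑ᶠ i, f i) ∨
    ((∑ᶠ i, g i) = (∑ᶠ i, f i) ∧
      ∀ k, ∑ i ∈ Finset.range k, f i ≤ ∑ i ∈ Finset.range k, g i)

/-
Expanding `𝕃 ℝ⁺ ℝ⁻` writes `V_{λ,μ}` as a sum over the powers `S`, `P`, `P'` of the operators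
`L_{ij}`, `R⁺_{ij}`, `R⁻_{ij}`; only finitely many terms survive because `v_a = 0` for `a < 0`.
The term with all powers zero is `v_{λ,μ}`. Every other surviving term is a multiple of
`v_{α,β} = v_{λ̃,μ̃}`, where `λ̃, μ̃` are `α, β` sorted decreasingly. The lowering operators lower
the sizes, while the strictly upper triangular raising operators, and then sorting, can only
raise prefix sums, strictly so if some raising power is nonzero; hence `(λ̃, μ̃)` strictly
dominates `(λ, μ)`. A bipartition has finitely many strict dominators, so `V` is unitriangular
over the monomial basis `{v_{λ,μ}}` with respect to the number of strict dominators, which makes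
`{V_{λ,μ}}` a basis as well.
-/

open Finset Submodule

section Triangular

variable {ι R M : Type*} [Ring R] [AddCommGroup M] [Module R M]

theorem Module.Basis.coord_apply_of_triangular (b : Module.Basis ι R M) {v : ι → M} {μ : ι → ℕ}
    (h : ∀ i, v i - b i ∈ span R (b '' {j | μ j < μ i})) {i j : ι} (hij : μ i ≤ μ j) :
    b.coord j (v i) = if i = j then 1 else 0 := by
  have hj : b.repr (v i - b i) j = 0 := by
    by_contra hne
    have := (b.mem_span_image.mp (h i)) (Finsupp.mem_support_iff.mpr hne)
    exact absurd hij (not_le.mpr this)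
  rw [← sub_add_cancel (v i) (b i), map_add, Module.Basis.coord_apply, hj, zero_add,
    Module.Basis.coord_apply, b.repr_self, Finsupp.single_apply]

theorem Module.Basis.linearIndependent_of_triangular (b : Module.Basis ι R M) {v : ι → M}
    {μ : ι → ℕ} (h : ∀ i, v i - b i ∈ span R (b '' {j | μ j < μ i})) : LinearIndependent R v := by
  rw [linearIndependent_iff]
  intro l hl
  by_contra hne
  obtain ⟨i₀, hi₀, hmax⟩ :=
    l.support.exists_max_image μ (Finsupp.support_nonempty_iff.mpr hne)
  have hcoord := congrArg (b.coord i₀) hl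
  rw [Finsupp.linearCombination_apply, map_finsuppSum, map_zero, Finsupp.sum,
    sum_eq_single_of_mem i₀ hi₀] at hcoord
  · rw [map_smul, b.coord_apply_of_triangular h le_rfl, if_pos rfl, smul_eq_mul, mul_one] at hcoord
    exact Finsupp.mem_support_iff.mp hi₀ hcoord
  · intro i hi hne
    rw [map_smul, b.coord_apply_of_triangular h (hmax i hi), if_neg hne, smul_zero]

theorem Module.Basis.span_eq_top_of_triangular (b : Module.Basis ι R M) {v : ι → M}
    {μ : ι → ℕ} (h : ∀ i, v i - b i ∈ span R (b '' {j | μ j < μ i})) :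
    span R (Set.range v) = ⊤ := by
  have hb (i : ι) : b i ∈ span R (Set.range v) := by
    induction i using (measure μ).wf.induction with
    | _ i ih =>
      have hlower : span R (b '' {j | μ j < μ i}) ≤ span R (Set.range v) :=
        span_le.mpr fun _ ⟨j, hj, hbj⟩ => hbj ▸ ih j hj
      rw [← sub_sub_cancel (v i) (b i)]
      exact sub_mem (subset_span ⟨i, rfl⟩) (hlower (h i))
  rw [eq_top_iff, ← b.span_eq]
  exact span_le.mpr fun _ ⟨i, hi⟩ => hi ▸ hb i

end Triangular

theorem exists_eq_finsum_of_mem_span_image {α R M : Type*} [Semiring R] [AddCommMonoid M]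
    [Module R M] {v : α → M} {s : Set α} [DecidablePred (· ∈ s)] {x : M}
    (hx : x ∈ span R (v '' s)) :
    ∃ c : α → R, x = ∑ᶠ p, if p ∈ s then c p • v p else 0 := by
  obtain ⟨l, hl, rfl⟩ := (Finsupp.mem_span_image_iff_linearCombination R).mp hx
  refine ⟨l, ?_⟩
  have hsupp : Function.support (fun p => if p ∈ s then l p • v p else 0) ⊆ l.support := by
    intro p hp
    by_contra hnot
    simp [Finsupp.notMem_support_iff.mp hnot] at hp
  rw [finsum_eq_sum_of_support_subset _ hsupp, Finsupp.linearCombination_apply, Finsupp.sum]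
  exact sum_congr rfl fun p hp => (if_pos (hl hp)).symm

theorem finsum_sub_mem_of_forall_ne {α R M : Type*} [Semiring R] [AddCommGroup M] [Module R M]
    (p : Submodule R M) {t : α → M} (ht : (Function.support t).Finite) (a : α)
    (h : ∀ x ≠ a, t x ∈ p) : ∑ᶠ x, t x - t a ∈ p := by
  classical
  rw [finsum_eq_sum_of_support_subset t (s := insert a ht.toFinset) (by simp [Set.subset_insert]),
    ← add_sum_erase _ _ (mem_insert_self a _), add_sub_cancel_left]
  exact sum_mem fun x hx => h x (ne_of_mem_erase hx)

section ZeroBeyond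

variable {ℓ : ℕ} {h : ℕ → ℕ}

theorem sum_range_eq_sum_fin_filter {M : Type*} [AddCommMonoid M] {h : ℕ → M}
    (hh : ∀ n, ℓ ≤ n → h n = 0) (k : ℕ) :
    ∑ i ∈ range k, h i = ∑ i : Fin ℓ with i.val < k, h i := by
  rw [sum_filter, Fin.sum_univ_eq_sum_range (fun i => if i < k then h i else 0), ← sum_filter,
    ← sum_filter_of_ne (p := (· < ℓ)) (s := range k) fun i _ hi => by_contra fun hl =>
      hi (hh i (not_lt.mp hl))]
  congr 1
  ext i
  simp only [mem_filter, mem_range]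
  omega

theorem finsum_eq_sum_range (hh : ∀ n, ℓ ≤ n → h n = 0) : ∑ᶠ k, h k = ∑ i ∈ range ℓ, h i :=
  finsum_eq_sum_of_support_subset h fun i hi => by simpa using not_le.mp fun hl => hi (hh i hl)

theorem finprod_vz_eq_prod_fin (hh : ∀ n, ℓ ≤ n → h n = 0) (s : Bool) :
    ∏ᶠ k, vz s (h k) = ∏ i : Fin ℓ, vz s (h i) := by
  rw [finprod_eq_prod_of_mulSupport_subset (fun k => vz s (h k)) (s := range ℓ) fun i hi => by
      simpa using not_le.mp fun hl => hi (by simp [hh i hl, vz]),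
    Fin.prod_univ_eq_prod_range (fun k => vz s (h k))]

end ZeroBeyond

section Partitions

variable {f g h : ℕ → ℕ}

theorem IsPart.eq_zero_of_plen_le (hf : IsPart f) (n : ℕ) (hn : plen f ≤ n) : f n = 0 :=
  Nat.sInf_mem (s := {N | ∀ n, N ≤ n → f n = 0}) hf.2 n hn

theorem IsPart.pos_of_lt_plen (hf : IsPart f) {i : ℕ} (hi : i < plen f) : 0 < f i := by
  refine Nat.pos_of_ne_zero fun h0 => not_le.mpr hi (Nat.sInf_le fun n hn => ?_)
  exact Nat.le_zero.mp (h0 ▸ hf.1 hn)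

theorem IsPart.sum_range_le_finsum (hf : IsPart f) (k : ℕ) :
    ∑ i ∈ range k, f i ≤ ∑ᶠ i, f i := by
  rw [finsum_eq_sum_range fun n hn => hf.eq_zero_of_plen_le n (le_of_max_le_left hn)]
  exact sum_le_sum_of_subset (range_subset_range.mpr (le_max_right _ _))

theorem IsPart.eq_zero_of_finsum_le (hf : IsPart f) {n : ℕ} (hs : ∑ᶠ i, f i ≤ n) {k : ℕ}
    (hk : n ≤ k) : f k = 0 := by
  by_contra hne
  have hpos : ∀ i ∈ range (k + 1), 1 ≤ f i := fun i hi =>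
    (Nat.one_le_iff_ne_zero.mpr hne).trans (hf.1 (Nat.lt_succ_iff.mp (mem_range.mp hi)))
  have := (card_nsmul_le_sum _ _ 1 hpos).trans (hf.sum_range_le_finsum (k + 1))
  rw [card_range, smul_eq_mul, mul_one] at this
  omega

theorem PDom.trans (h₁ : PDom h g) (h₂ : PDom g f) : PDom h f := by
  rcases h₁ with h₁ | ⟨e₁, d₁⟩ <;> rcases h₂ with h₂ | ⟨e₂, d₂⟩
  · exact Or.inl (h₁.trans h₂)
  · exact Or.inl (e₂ ▸ h₁)
  · exact Or.inl (e₁ ▸ h₂)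
  · exact Or.inr ⟨e₁.trans e₂, fun k => (d₂ k).trans (d₁ k)⟩

theorem PDom.antisymm (h₁ : PDom g f) (h₂ : PDom f g) : g = f := by
  rcases h₁ with h₁ | ⟨e₁, d₁⟩ <;> rcases h₂ with h₂ | ⟨e₂, d₂⟩ <;> try omega
  have hprefix (k : ℕ) : ∑ i ∈ range k, g i = ∑ i ∈ range k, f i := le_antisymm (d₂ k) (d₁ k)
  funext k
  have := hprefix (k + 1)
  rwa [sum_range_succ, sum_range_succ, hprefix k, Nat.add_left_cancel_iff] at this

theorem PDom.finsum_le (h : PDom g f) : ∑ᶠ i, g i ≤ ∑ᶠ i, f i := by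
  rcases h with h | ⟨h, -⟩ <;> omega

theorem finite_setOf_isPart_finsum_le (n : ℕ) :
    {f : ℕ → ℕ | IsPart f ∧ ∑ᶠ i, f i ≤ n}.Finite := by
  refine Set.Finite.of_finite_image (f := fun f (i : Fin n) => f i)
    ((Set.finite_Iic fun _ => n).subset ?_) ?_
  · rintro _ ⟨f, ⟨hf, hs⟩, rfl⟩ i
    exact ((hf.sum_range_le_finsum (i + 1)).trans' (single_le_sum (by simp)
      (by simp : i.val ∈ range (i + 1)))).trans hs
  · intro f₁ ⟨hf₁, hs₁⟩ f₂ ⟨hf₂, hs₂⟩ heq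
    funext k
    by_cases hk : k < n
    · exact congrFun heq ⟨k, hk⟩
    · rw [hf₁.eq_zero_of_finsum_le hs₁ (not_lt.mp hk), hf₂.eq_zero_of_finsum_le hs₂ (not_lt.mp hk)]

def strictDominators (f g : ℕ → ℕ) : Set ((ℕ → ℕ) × (ℕ → ℕ)) :=
  {p | IsPart p.1 ∧ IsPart p.2 ∧ PDom p.1 f ∧ PDom p.2 g ∧ p ≠ (f, g)}

theorem finite_strictDominators (f g : ℕ → ℕ) : (strictDominators f g).Finite :=
  ((finite_setOf_isPart_finsum_le _).prod (finite_setOf_isPart_finsum_le _)).subset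
    fun _ ⟨hp, hq, hpf, hqg, _⟩ => ⟨⟨hp, hpf.finsum_le⟩, hq, hqg.finsum_le⟩

theorem strictDominators_ssubset {f g : ℕ → ℕ} {q : (ℕ → ℕ) × (ℕ → ℕ)}
    (hq : q ∈ strictDominators f g) : strictDominators q.1 q.2 ⊂ strictDominators f g := by
  obtain ⟨hq₁, hq₂, hqf, hqg, hne⟩ := hq
  refine ⟨fun r ⟨hr₁, hr₂, hrq, hrq', hrne⟩ => ⟨hr₁, hr₂, hrq.trans hqf, hrq'.trans hqg, ?_⟩,
    fun hsub => (hsub ⟨hq₁, hq₂, hqf, hqg, hne⟩).2.2.2.2 rfl⟩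
  rintro rfl
  exact hne (Prod.ext (hqf.antisymm hrq) (hqg.antisymm hrq'))

theorem ncard_strictDominators_lt {f g : ℕ → ℕ} {q : (ℕ → ℕ) × (ℕ → ℕ)}
    (hq : q ∈ strictDominators f g) :
    (strictDominators q.1 q.2).ncard < (strictDominators f g).ncard :=
  Set.ncard_lt_ncard (strictDominators_ssubset hq) (finite_strictDominators f g)

end Partitions

section Raising

variable {n : ℕ}

def StrictUpper (P : Fin n × Fin n → ℕ) : Prop := ∀ ij : Fin n × Fin n, ¬ ij.1 < ij.2 → P ij = 0

/-- The `i`-th entry of `∏ R_{ij}^{P(i,j)}` applied to the exponent vector `c`. -/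
def raise (c : Fin n → ℤ) (P : Fin n × Fin n → ℕ) (i : Fin n) : ℤ :=
  c i + (∑ k, (P (i, k) : ℤ)) - ∑ k, (P (k, i) : ℤ)

variable {P : Fin n × Fin n → ℕ}

theorem sum_raise_of_isLowerSet (hP : StrictUpper P) (c : Fin n → ℤ) {F : Finset (Fin n)}
    (hF : IsLowerSet (F : Set (Fin n))) :
    ∑ i ∈ F, raise c P i = ∑ i ∈ F, c i + ∑ i ∈ F, ∑ k ∈ Fᶜ, (P (i, k) : ℤ) := by
  have hin : ∑ i ∈ F, ∑ k ∈ Fᶜ, (P (k, i) : ℤ) = 0 :=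
    sum_eq_zero fun i hi => sum_eq_zero fun k hk => by
      rw [hP (k, i) fun hki => mem_compl.mp hk (hF hki.le hi), Nat.cast_zero]
  simp only [raise, sum_sub_distrib, sum_add_distrib, ← sum_add_sum_compl F fun k => (P (_, k) : ℤ),
    ← sum_add_sum_compl F fun k => (P (k, _) : ℤ)]
  rw [sum_comm (s := F) (t := F), hin]
  ring

theorem sum_raise (hP : StrictUpper P) (c : Fin n → ℤ) : ∑ i, raise c P i = ∑ i, c i := by
  simpa using sum_raise_of_isLowerSet hP c (F := univ) (by simpa using isLowerSet_univ)

theorem isLowerSet_filter_val_lt (k : ℕ) :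
    IsLowerSet ((univ.filter fun i : Fin n => i.val < k : Finset (Fin n)) : Set (Fin n)) :=
  fun i j hji hi => by simp only [coe_filter, mem_univ, true_and, Set.mem_ofPred_eq] at hi ⊢; omega

theorem entry_le_sum_cross {i j : Fin n} (hij : i < j) :
    (P (i, j) : ℤ) ≤ ∑ i' : Fin n with i'.val < j.val,
      ∑ k ∈ (univ.filter fun k : Fin n => k.val < j.val)ᶜ, (P (i', k) : ℤ) :=
  (single_le_sum (f := fun k => (P (i, k) : ℤ)) (fun k _ => Int.natCast_nonneg _)
    (by simp : j ∈ (univ.filter fun k : Fin n => k.val < j.val)ᶜ)).trans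
  (single_le_sum (f := fun i => ∑ k ∈ (univ.filter fun k : Fin n => k.val < j.val)ᶜ,
      (P (i, k) : ℤ)) (fun _ _ => sum_nonneg fun _ _ => Int.natCast_nonneg _)
    (by simpa using hij))

theorem entry_le_of_raise_nonneg (hP : StrictUpper P) {c a : Fin n → ℤ} (hc : ∀ i, c i ≤ a i)
    (ha : ∀ i, 0 ≤ a i) (hr : ∀ i, 0 ≤ raise c P i) (ij : Fin n × Fin n) :
    (P ij : ℤ) ≤ ∑ i, a i := by
  obtain ⟨i, j⟩ := ij
  by_cases hij : i < j
  · set F := univ.filter fun k : Fin n => k.val < j.val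
    have hprefix := sum_raise_of_isLowerSet hP c (isLowerSet_filter_val_lt j.val)
    have hr_compl := sum_nonneg fun i (_ : i ∈ Fᶜ) => hr i
    have hc_compl := sum_le_sum fun i (_ : i ∈ Fᶜ) => hc i
    have ha_compl : ∑ i ∈ Fᶜ, a i ≤ ∑ i, a i :=
      sum_le_sum_of_subset_of_nonneg (subset_univ _) fun i _ _ => ha i
    have htotal := sum_raise hP c
    rw [← sum_add_sum_compl F, ← sum_add_sum_compl F c] at htotal
    linarith [entry_le_sum_cross (P := P) hij]
  · rw [hP (i, j) hij, Nat.cast_zero]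
    exact sum_nonneg fun i _ => ha i

end Raising

section SortDesc

variable {ℓ : ℕ}

def antitoneSort (α : Fin ℓ → ℕ) : Equiv.Perm (Fin ℓ) := Fin.revPerm.trans (Tuple.sort α)

theorem antitone_comp_antitoneSort (α : Fin ℓ → ℕ) : Antitone (α ∘ antitoneSort α) :=
  fun _ _ hij => Tuple.monotone_sort α (Fin.rev_le_rev.mpr hij)

/-- The partition `λ` with `v_λ = v_α`. -/
def sortDesc (α : Fin ℓ → ℕ) (k : ℕ) : ℕ := if h : k < ℓ then α (antitoneSort α ⟨k, h⟩) else 0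

theorem sortDesc_eq_zero (α : Fin ℓ → ℕ) {k : ℕ} (hk : ℓ ≤ k) : sortDesc α k = 0 :=
  dif_neg (not_lt.mpr hk)

theorem sortDesc_fin (α : Fin ℓ → ℕ) (i : Fin ℓ) : sortDesc α i = α (antitoneSort α i) :=
  dif_pos i.2

theorem isPart_sortDesc (α : Fin ℓ → ℕ) : IsPart (sortDesc α) := by
  refine ⟨fun j k hjk => ?_, ℓ, fun k hk => sortDesc_eq_zero α hk⟩
  by_cases hk : k < ℓ
  · rw [sortDesc, dif_pos hk, sortDesc, dif_pos (hjk.trans_lt hk)]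
    exact antitone_comp_antitoneSort α (Fin.mk_le_mk.mpr hjk)
  · rw [sortDesc_eq_zero α (not_lt.mp hk)]
    exact Nat.zero_le _

theorem sum_filter_le_sum_range_sortDesc (α : Fin ℓ → ℕ) (k : ℕ) :
    ∑ i : Fin ℓ with i.val < k, α i ≤ ∑ i ∈ range k, sortDesc α i := by
  set w : Fin ℓ → ℕ := fun i => if i.val < k then 1 else 0
  have hw : Antitone w := fun i j hij => by
    simp only [w]
    split_ifs <;> omega
  have key := (hw.monovary (antitone_comp_antitoneSort α)).sum_smul_comp_perm_le_sum_smul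
    (σ := (antitoneSort α)⁻¹)
  simp only [Function.comp_apply, Equiv.Perm.coe_inv, Equiv.apply_symm_apply, smul_eq_mul, w,
    ite_mul, one_mul, zero_mul, ← sum_filter] at key
  rwa [sum_range_eq_sum_fin_filter (fun n hn => sortDesc_eq_zero α hn),
    sum_congr rfl fun i _ => sortDesc_fin α i]

theorem finsum_sortDesc (α : Fin ℓ → ℕ) : ∑ᶠ k, sortDesc α k = ∑ i, α i := by
  rw [finsum_eq_sum_range fun n hn => sortDesc_eq_zero α hn, ← Fin.sum_univ_eq_sum_range]
  simp only [sortDesc_fin]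
  exact Equiv.sum_comp (antitoneSort α) α

theorem finprod_vz_sortDesc (α : Fin ℓ → ℕ) (s : Bool) :
    ∏ᶠ k, vz s (sortDesc α k) = ∏ i, vz s (α i) := by
  rw [finprod_vz_eq_prod_fin (fun n hn => sortDesc_eq_zero α hn)]
  simp only [sortDesc_fin]
  exact Equiv.prod_comp (antitoneSort α) fun i => vz s (α i)

end SortDesc

section Dominance

/-! Here `α = raise (f - D) P` is the exponent vector of a term of the expansion: `D i ≥ 0` is
what the lowering operators remove from the `i`-th part of `f`. -/

variable {ℓ : ℕ} {f : ℕ → ℕ} {D : Fin ℓ → ℤ} {P : Fin ℓ × Fin ℓ → ℕ} {α : Fin ℓ → ℕ}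

theorem finsum_sortDesc_raise (hf : ∀ n, ℓ ≤ n → f n = 0) (hP : StrictUpper P)
    (hα : ∀ i, (α i : ℤ) = raise (fun i => f i - D i) P i) :
    ((∑ᶠ k, sortDesc α k : ℕ) : ℤ) + ∑ i, D i = ((∑ᶠ k, f k : ℕ) : ℤ) := by
  rw [finsum_sortDesc, finsum_eq_sum_range hf, ← Fin.sum_univ_eq_sum_range]
  push_cast
  rw [sum_congr rfl fun i _ => hα i, sum_raise hP, sum_sub_distrib, sub_add_cancel]

theorem sum_range_sub_add_le_sum_range_sortDesc (hf : ∀ n, ℓ ≤ n → f n = 0)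
    (hD : ∀ i, 0 ≤ D i) (hP : StrictUpper P)
    (hα : ∀ i, (α i : ℤ) = raise (fun i => f i - D i) P i) (k : ℕ) :
    ((∑ i ∈ range k, f i : ℕ) : ℤ) - ∑ i, D i + ∑ i : Fin ℓ with i.val < k,
        ∑ j ∈ (univ.filter fun j : Fin ℓ => j.val < k)ᶜ, (P (i, j) : ℤ)
      ≤ ((∑ i ∈ range k, sortDesc α i : ℕ) : ℤ) := by
  have hsorted : ((∑ i : Fin ℓ with i.val < k, α i : ℕ) : ℤ) ≤ _ :=
    Nat.cast_le.mpr (sum_filter_le_sum_range_sortDesc α k)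
  have hprefix := sum_raise_of_isLowerSet hP (fun i => (f i : ℤ) - D i)
    (isLowerSet_filter_val_lt k)
  have hD_prefix : ∑ i : Fin ℓ with i.val < k, D i ≤ ∑ i, D i :=
    sum_le_sum_of_subset_of_nonneg (subset_univ _) fun i _ _ => hD i
  rw [sum_range_eq_sum_fin_filter hf]
  push_cast at hsorted ⊢
  rw [sum_congr rfl fun i _ => hα i, hprefix, sum_sub_distrib] at hsorted
  linarith

theorem pdom_sortDesc_raise (hf : ∀ n, ℓ ≤ n → f n = 0) (hD : ∀ i, 0 ≤ D i) (hP : StrictUpper P)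
    (hα : ∀ i, (α i : ℤ) = raise (fun i => f i - D i) P i) : PDom (sortDesc α) f := by
  have hsize := finsum_sortDesc_raise hf hP hα
  rcases (sum_nonneg fun i _ => hD i : 0 ≤ ∑ i, D i).lt_or_eq with hpos | hzero
  · left
    omega
  · refine Or.inr ⟨by omega, fun k => ?_⟩
    have hcross : 0 ≤ ∑ i : Fin ℓ with i.val < k,
        ∑ j ∈ (univ.filter fun j : Fin ℓ => j.val < k)ᶜ, (P (i, j) : ℤ) :=
      sum_nonneg fun _ _ => sum_nonneg fun _ _ => Int.natCast_nonneg _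
    have := sum_range_sub_add_le_sum_range_sortDesc hf hD hP hα k
    omega

theorem eq_zero_of_sortDesc_raise_eq (hf : ∀ n, ℓ ≤ n → f n = 0) (hD : ∀ i, 0 ≤ D i)
    (hP : StrictUpper P) (hα : ∀ i, (α i : ℤ) = raise (fun i => f i - D i) P i)
    (heq : sortDesc α = f) : D = 0 ∧ P = 0 := by
  have hsize := finsum_sortDesc_raise hf hP hα
  rw [heq, add_eq_left] at hsize
  refine ⟨funext fun i => (sum_eq_zero_iff_of_nonneg fun i _ => hD i).mp hsize i (mem_univ i),
    funext fun ⟨i, j⟩ => ?_⟩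
  by_contra hne
  have hij : i < j := by_contra fun h => hne (hP (i, j) h)
  have hentry := entry_le_sum_cross (P := P) hij
  have := sum_range_sub_add_le_sum_range_sortDesc hf hD hP hα j.val
  rw [heq, hsize] at this
  have : (P (i, j) : ℤ) ≠ 0 := by exact_mod_cast hne
  omega

end Dominance

section Monomials

open MvPolynomial

theorem vz_natCast_add_one (s : Bool) (n : ℕ) : vz s ((n : ℤ) + 1) = X (s, n) := by
  rw [vz, if_neg (by omega), if_neg (by omega)]
  congr

theorem vz_zero (s : Bool) : vz s 0 = 1 := by
  simp [vz]

theorem vz_neg (s : Bool) {a : ℤ} (ha : a < 0) : vz s a = 0 := if_pos ha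

theorem MvPolynomial.monomial_toFinsupp_one {σ R : Type*} [CommSemiring R] [DecidableEq σ]
    (s : Multiset σ) : monomial (Multiset.toFinsupp s) (1 : R) = (s.map X).prod := by
  induction s using Multiset.induction_on with
  | empty => simp
  | cons a s ih =>
    rw [← Multiset.singleton_add, Multiset.toFinsupp_add, Multiset.toFinsupp_singleton,
      ← mul_one (1 : R), ← monomial_mul, ih]
    simp [X]

variable {f g : ℕ → ℕ}

theorem IsPart.vz_eq_X (hf : IsPart f) (s : Bool) {i : ℕ} (hi : i < plen f) :
    vz s (f i) = X (s, f i - 1) := by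
  obtain ⟨n, hn⟩ := Nat.exists_eq_add_one_of_ne_zero (hf.pos_of_lt_plen hi).ne'
  rw [hn, Nat.cast_add_one, vz_natCast_add_one, Nat.add_sub_cancel]

/-- The variable `(s, r)` stands for `v^s_{r+1}`, so these are the second coordinates of the
variables of `v_f`. -/
def partsPred (f : ℕ → ℕ) : List ℕ := List.ofFn fun i : Fin (plen f) => f i - 1

def vmonoVars (f g : ℕ → ℕ) : List (Bool × ℕ) :=
  (partsPred f).map (Prod.mk true) ++ (partsPred g).map (Prod.mk false)

def vmonoExp (f g : ℕ → ℕ) : (Bool × ℕ) →₀ ℕ := Multiset.toFinsupp (vmonoVars f g : Multiset _)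

theorem vmono_eq_monomial (hf : IsPart f) (hg : IsPart g) :
    vmono f g = monomial (vmonoExp f g) 1 := by
  rw [vmonoExp, monomial_toFinsupp_one, vmono, finprod_vz_eq_prod_fin hf.eq_zero_of_plen_le,
    finprod_vz_eq_prod_fin hg.eq_zero_of_plen_le]
  simp [vmonoVars, partsPred, List.map_ofFn, List.prod_ofFn, Function.comp_def,
    hf.vz_eq_X, hg.vz_eq_X]

theorem IsPart.eq_of_perm_partsPred {f' : ℕ → ℕ} (hf : IsPart f) (hf' : IsPart f')
    (h : (partsPred f).Perm (partsPred f')) : f = f' := by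
  have hsorted : ∀ {f}, IsPart f → (partsPred f).SortedGE := fun hf =>
    List.sortedGE_ofFn_iff.mpr fun i j hij => Nat.sub_le_sub_right (hf.1 hij) 1
  have heq := h.eq_of_sortedGE (hsorted hf) (hsorted hf')
  have hlen : plen f = plen f' := by simpa [partsPred] using congrArg List.length heq
  funext k
  by_cases hk : k < plen f
  · have hk' := congrArg (·[k]?) heq
    simp only [partsPred, List.getElem?_ofFn, hk, hlen ▸ hk, dite_true, Option.some_inj] at hk'
    have := hf.pos_of_lt_plen hk
    have := hf'.pos_of_lt_plen (hlen ▸ hk)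
    omega
  · rw [hf.eq_zero_of_plen_le k (not_lt.mp hk), hf'.eq_zero_of_plen_le k (hlen ▸ not_lt.mp hk)]

abbrev Bipartition : Type := {f : ℕ → ℕ // IsPart f} × {g : ℕ → ℕ // IsPart g}

theorem vmonoExp_injective :
    Function.Injective fun p : Bipartition => vmonoExp p.1.1 p.2.1 := by
  rintro ⟨⟨f, hf⟩, ⟨g, hg⟩⟩ ⟨⟨f', hf'⟩, ⟨g', hg'⟩⟩ h
  have hperm : (vmonoVars f g).Perm (vmonoVars f' g') :=
    Multiset.coe_eq_coe.mp (Multiset.toFinsupp.injective h)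
  have hside : ∀ s : Bool, ((partsPred (if s then f else g)).Perm
      (partsPred (if s then f' else g'))) := fun s => by
    have := (hperm.filter (fun x => x.1 == s)).map Prod.snd
    cases s <;> simpa [vmonoVars, List.filter_append, List.filter_map, Function.comp_def,
      List.map_map] using this
  exact Prod.ext (Subtype.ext (hf.eq_of_perm_partsPred hf' (hside true)))
    (Subtype.ext (hg.eq_of_perm_partsPred hg' (hside false)))

theorem exists_vmono_eq_monomial (d : (Bool × ℕ) →₀ ℕ) :
    ∃ p : Bipartition, vmono p.1.1 p.2.1 = monomial d 1 := by
  classical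
  set l := (Finsupp.toMultiset d).toList
  let α : Fin l.length → ℕ := fun i => if l[i].1 then l[i].2 + 1 else 0
  let β : Fin l.length → ℕ := fun i => if l[i].1 then 0 else l[i].2 + 1
  refine ⟨(⟨sortDesc α, isPart_sortDesc α⟩, ⟨sortDesc β, isPart_sortDesc β⟩), ?_⟩
  have hX : ∀ x : Bool × ℕ, vz true ((if x.1 then x.2 + 1 else 0 : ℕ) : ℤ) *
      vz false ((if x.1 then 0 else x.2 + 1 : ℕ) : ℤ) = X x := by
    rintro ⟨_ | _, r⟩ <;> simp [vz_natCast_add_one, vz_zero]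
  rw [vmono, finprod_vz_sortDesc, finprod_vz_sortDesc, ← prod_mul_distrib,
    Fintype.prod_congr _ _ fun i => hX l[i]]
  conv_rhs => rw [← Finsupp.toMultiset_toFinsupp d, monomial_toFinsupp_one]
  simp only [Fin.getElem_fin, Fin.prod_univ_fun_getElem]
  rw [← Multiset.prod_coe, ← Multiset.map_coe, Multiset.coe_toList]

theorem linearIndependent_vmono :
    LinearIndependent K fun p : Bipartition => vmono p.1.1 p.2.1 := by
  have : (fun p : Bipartition => vmono p.1.1 p.2.1) =
      basisMonomials (Bool × ℕ) K ∘ fun p => vmonoExp p.1.1 p.2.1 :=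
    funext fun p => by simp [vmono_eq_monomial p.1.2 p.2.2, coe_basisMonomials]
  rw [this]
  exact (basisMonomials _ K).linearIndependent.comp _ vmonoExp_injective

theorem span_vmono_eq_top :
    span K (Set.range fun p : Bipartition => vmono p.1.1 p.2.1) = ⊤ := by
  rw [eq_top_iff, ← (basisMonomials (Bool × ℕ) K).span_eq, coe_basisMonomials]
  refine span_mono ?_
  rintro _ ⟨d, rfl⟩
  exact exists_vmono_eq_monomial d

def vmonoBasis : Module.Basis Bipartition K RV :=
  .mk linearIndependent_vmono span_vmono_eq_top.ge

theorem coe_vmonoBasis : ⇑vmonoBasis = fun p : Bipartition => vmono p.1.1 p.2.1 :=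
  Module.Basis.coe_mk _ _

end Monomials

section Expansion

variable {ℓ m : ℕ}

/-- The term of `Vv ℓ m a b` indexed by the powers `x = (S, P, P')` of the operators `L_{ij}`,
`R⁺_{ij}` and `R⁻_{ij}`. -/
def vvTerm (a : Fin ℓ → ℤ) (b : Fin m → ℤ)
    (x : (Fin ℓ × Fin m → ℕ) × (Fin ℓ × Fin ℓ → ℕ) × (Fin m × Fin m → ℕ)) : RV :=
  if StrictUpper x.2.1 ∧ StrictUpper x.2.2 then
    ((∏ ij, cL (x.1 ij)) * (∏ ij, cL (x.2.1 ij)) * ∏ ij, cL (x.2.2 ij)) •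
      ((∏ i, vz true (raise (fun i => a i - ∑ j, (x.1 (i, j) : ℤ)) x.2.1 i)) *
        ∏ j, vz false (raise (fun j => b j - ∑ i, (x.1 (i, j) : ℤ)) x.2.2 j))
  else 0

theorem Vv_eq_finsum_vvTerm (a : Fin ℓ → ℤ) (b : Fin m → ℤ) :
    Vv ℓ m a b = ∑ᶠ S, ∑ᶠ P, ∑ᶠ P', vvTerm a b (S, P, P') :=
  -- the two `if`s differ only in the `Decidable` instances of their conditions
  finsum_congr fun _ => finsum_congr fun _ => finsum_congr fun _ =>
    ite_congr rfl (fun _ => rfl) fun _ => rfl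

theorem vvTerm_zero (a : Fin ℓ → ℤ) (b : Fin m → ℤ) :
    vvTerm a b 0 = (∏ i, vz true (a i)) * ∏ j, vz false (b j) := by
  simp [vvTerm, StrictUpper, raise, cL]

variable {a : Fin ℓ → ℤ} {b : Fin m → ℤ}
  {x : (Fin ℓ × Fin m → ℕ) × (Fin ℓ × Fin ℓ → ℕ) × (Fin m × Fin m → ℕ)}

theorem vvTerm_ne_zero (h : vvTerm a b x ≠ 0) :
    (StrictUpper x.2.1 ∧ StrictUpper x.2.2) ∧
      (∀ i, 0 ≤ raise (fun i => a i - ∑ j, (x.1 (i, j) : ℤ)) x.2.1 i) ∧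
      ∀ j, 0 ≤ raise (fun j => b j - ∑ i, (x.1 (i, j) : ℤ)) x.2.2 j := by
  by_cases hc : StrictUpper x.2.1 ∧ StrictUpper x.2.2
  · refine ⟨hc, fun i => ?_, fun j => ?_⟩ <;> refine not_lt.mp fun hneg => h ?_
    · rw [vvTerm, if_pos hc, prod_eq_zero (mem_univ i) (vz_neg _ hneg), zero_mul, smul_zero]
    · rw [vvTerm, if_pos hc, prod_eq_zero (mem_univ j) (vz_neg _ hneg), mul_zero, smul_zero]
  · exact absurd (if_neg hc) h

theorem finite_support_vvTerm (ha : ∀ i, 0 ≤ a i) (hb : ∀ j, 0 ≤ b j) :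
    (Function.support (vvTerm a b)).Finite := by
  set B := (∑ i, a i + ∑ j, b j).toNat
  have hB : ∀ n : ℕ, (n : ℤ) ≤ ∑ i, a i ∨ (n : ℤ) ≤ ∑ j, b j → n ≤ B := fun n hn => by
    have := sum_nonneg fun i (_ : i ∈ univ) => ha i
    have := sum_nonneg fun j (_ : j ∈ univ) => hb j
    omega
  refine ((Set.finite_Iic fun _ => B).prod
    ((Set.finite_Iic fun _ => B).prod (Set.finite_Iic fun _ => B))).subset fun x hx => ?_
  obtain ⟨⟨hP, hP'⟩, hA, hB'⟩ := vvTerm_ne_zero hx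
  have hS : ∑ ij, (x.1 ij : ℤ) ≤ ∑ i, a i := by
    have := sum_nonneg fun i (_ : i ∈ univ) => hA i
    rw [sum_raise hP, sum_sub_distrib, ← Fintype.sum_prod_type'] at this
    linarith
  have hsub : ∀ i, a i - ∑ j, (x.1 (i, j) : ℤ) ≤ a i := fun i => by
    linarith [sum_nonneg fun j (_ : j ∈ univ) => Int.natCast_nonneg (x.1 (i, j))]
  have hsub' : ∀ j, b j - ∑ i, (x.1 (i, j) : ℤ) ≤ b j := fun j => by
    linarith [sum_nonneg fun i (_ : i ∈ univ) => Int.natCast_nonneg (x.1 (i, j))]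
  refine ⟨fun ij => hB _ (Or.inl ?_), fun ij => hB _ (Or.inl ?_), fun ij => hB _ (Or.inr ?_)⟩
  · exact (single_le_sum (fun ij _ => Int.natCast_nonneg (x.1 ij)) (mem_univ ij)).trans hS
  · exact entry_le_of_raise_nonneg hP hsub ha hA ij
  · exact entry_le_of_raise_nonneg hP' hsub' hb hB' ij

end Expansion

section Triangularity

variable {f g : ℕ → ℕ}

theorem vvTerm_mem_span (hf : IsPart f) (hg : IsPart g)
    {x : (Fin (plen f) × Fin (plen g) → ℕ) × (Fin (plen f) × Fin (plen f) → ℕ) ×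
      (Fin (plen g) × Fin (plen g) → ℕ)} (hx : x ≠ 0) :
    vvTerm (fun i => (f i : ℤ)) (fun j => (g j : ℤ)) x ∈
      span K ((fun p => vmono p.1 p.2) '' strictDominators f g) := by
  by_cases h0 : vvTerm (fun i => (f i : ℤ)) (fun j => (g j : ℤ)) x = 0
  · rw [h0]
    exact zero_mem _
  obtain ⟨⟨hP, hP'⟩, hA, hB⟩ := vvTerm_ne_zero h0
  obtain ⟨S, P, P'⟩ := x
  set α := fun i => (raise (fun i => (f i : ℤ) - ∑ j, (S (i, j) : ℤ)) P i).toNat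
  set β := fun j => (raise (fun j => (g j : ℤ) - ∑ i, (S (i, j) : ℤ)) P' j).toNat
  have hα : ∀ i, (α i : ℤ) = _ := fun i => Int.toNat_of_nonneg (hA i)
  have hβ : ∀ j, (β j : ℤ) = _ := fun j => Int.toNat_of_nonneg (hB j)
  have hrow : ∀ i, 0 ≤ ∑ j, (S (i, j) : ℤ) := fun i => sum_nonneg fun _ _ => Int.natCast_nonneg _
  have hcol : ∀ j, 0 ≤ ∑ i, (S (i, j) : ℤ) := fun j => sum_nonneg fun _ _ => Int.natCast_nonneg _
  have hterm : vvTerm (fun i => (f i : ℤ)) (fun j => (g j : ℤ)) (S, P, P') =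
      ((∏ ij, cL (S ij)) * (∏ ij, cL (P ij)) * ∏ ij, cL (P' ij)) •
        vmono (sortDesc α) (sortDesc β) := by
    rw [vvTerm, if_pos ⟨hP, hP'⟩, vmono, finprod_vz_sortDesc, finprod_vz_sortDesc]
    simp only [hα, hβ]
  have hne : (sortDesc α, sortDesc β) ≠ (f, g) := by
    intro heq
    obtain ⟨hS, hP0⟩ := eq_zero_of_sortDesc_raise_eq hf.eq_zero_of_plen_le hrow hP hα
      (congrArg Prod.fst heq)
    obtain ⟨-, hP'0⟩ := eq_zero_of_sortDesc_raise_eq hg.eq_zero_of_plen_le hcol hP' hβ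
      (congrArg Prod.snd heq)
    refine hx (Prod.ext (funext fun ⟨i, j⟩ => ?_) (Prod.ext hP0 hP'0))
    have := (sum_eq_zero_iff_of_nonneg fun _ _ => Int.natCast_nonneg _).mp (congrFun hS i) j
      (mem_univ j)
    exact_mod_cast this
  rw [hterm]
  exact Submodule.smul_mem _ _ (subset_span ⟨_, ⟨isPart_sortDesc α, isPart_sortDesc β,
    pdom_sortDesc_raise hf.eq_zero_of_plen_le hrow hP hα,
    pdom_sortDesc_raise hg.eq_zero_of_plen_le hcol hP' hβ, hne⟩, rfl⟩)

theorem Vpart_sub_vmono_mem_span (hf : IsPart f) (hg : IsPart g) :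
    Vpart f g - vmono f g ∈
      span K ((fun p => vmono p.1 p.2) '' strictDominators f g) := by
  have hfin := finite_support_vvTerm (a := fun i : Fin (plen f) => (f i : ℤ))
    (b := fun j : Fin (plen g) => (g j : ℤ)) (fun _ => Int.natCast_nonneg _)
    (fun _ => Int.natCast_nonneg _)
  have hvmono : vmono f g =
      vvTerm (fun i : Fin (plen f) => (f i : ℤ)) (fun j : Fin (plen g) => (g j : ℤ)) 0 := by
    rw [vvTerm_zero, vmono, finprod_vz_eq_prod_fin hf.eq_zero_of_plen_le,
      finprod_vz_eq_prod_fin hg.eq_zero_of_plen_le]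
  rw [Vpart, Vv_eq_finsum_vvTerm, ← finsum_curry₃ _ hfin, hvmono]
  exact finsum_sub_mem_of_forall_ne _ hfin 0 fun x hx => vvTerm_mem_span hf hg hx

end Triangularity

theorem double_HL_triangular_and_basis :
    (∀ f g : ℕ → ℕ, IsPart f → IsPart g →
      ∃ c : (ℕ → ℕ) × (ℕ → ℕ) → K,
        Vpart f g = vmono f g +
          ∑ᶠ p : (ℕ → ℕ) × (ℕ → ℕ),
            if IsPart p.1 ∧ IsPart p.2 ∧ PDom p.1 f ∧ PDom p.2 g ∧ p ≠ (f, g) then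
              c p • vmono p.1 p.2
            else 0) ∧
    LinearIndependent K
      (fun p : {f : ℕ → ℕ // IsPart f} × {g : ℕ → ℕ // IsPart g} => Vpart p.1.1 p.2.1) ∧
    Submodule.span K (Set.range
      (fun p : {f : ℕ → ℕ // IsPart f} × {g : ℕ → ℕ // IsPart g} => Vpart p.1.1 p.2.1)) = ⊤ := by
  have htri : ∀ p : Bipartition, Vpart p.1.1 p.2.1 - vmonoBasis p ∈ span K
      (vmonoBasis '' {q | (strictDominators q.1.1 q.2.1).ncard <
        (strictDominators p.1.1 p.2.1).ncard}) := by
    rintro ⟨⟨f, hf⟩, ⟨g, hg⟩⟩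
    rw [coe_vmonoBasis]
    refine span_mono ?_ (Vpart_sub_vmono_mem_span hf hg)
    rintro _ ⟨q, hq, rfl⟩
    exact ⟨(⟨q.1, hq.1⟩, ⟨q.2, hq.2.1⟩), ncard_strictDominators_lt hq, rfl⟩
  refine ⟨fun f g hf hg => ?_, vmonoBasis.linearIndependent_of_triangular htri,
    vmonoBasis.span_eq_top_of_triangular htri⟩
  obtain ⟨c, hc⟩ := exists_eq_finsum_of_mem_span_image (Vpart_sub_vmono_mem_span hf hg)
  exact ⟨c, sub_eq_iff_eq_add'.mp (hc.trans
    (finsum_congr fun _ => ite_congr rfl (fun _ => rfl) fun _ => rfl))⟩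

end
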